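/- arXiv:1806.04321 — 6 statements merged into one kernel-verified Lean document; each statement's English description precedes it below -/
import Mathlib

section
/- The energy-constrained projection problem min_{W ∈ Ω} ‖W − Z‖² , where Ω = {W : ⟨A, supp(W)⟩ ≤ B} with A a nonnegative weight vector depending only on the support pattern, is equivalent to the 0/1 knapsack problem max_{ξ ∈ {0,1}ⁿ} ⟨Z⊙Z, ξ⟩ subject to ⟨A, ξ⟩ ≤ B: if ξ* is an optimal knapsack solution then Z⊙ξ* is an optimal projection, and conversely. -/
/-!
Writing `s = supp W`, replacing `W` by `Z ⊙ s` keeps the support cost and never increases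
`‖W - Z‖²`, strictly decreasing it unless `W = Z ⊙ s`; so optimal projections are exactly of the
form `Z ⊙ ξ` with `ξ` binary. For binary `ξ` we have `‖Z ⊙ ξ - Z‖² = ‖Z‖² - ⟨Z ⊙ Z, ξ⟩`, hence
minimising the distance is maximising the knapsack value.
-/

open Finset

variable {ι : Type*}

noncomputable def supportIndicator (W : ι → ℝ) : ι → ℝ := fun i => if W i ≠ 0 then 1 else 0

def IsBinary (ξ : ι → ℝ) : Prop := ∀ i, ξ i = 0 ∨ ξ i = 1

lemma isBinary_supportIndicator (W : ι → ℝ) : IsBinary (supportIndicator W) := fun i => by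
  by_cases h : W i = 0 <;> simp [supportIndicator, h]

lemma sum_sq_mul_sub_eq_of_isBinary [Fintype ι] (Z : ι → ℝ) {ξ : ι → ℝ} (hξ : IsBinary ξ) :
    ∑ i, (Z i * ξ i - Z i) ^ 2 = ∑ i, Z i ^ 2 - ∑ i, Z i ^ 2 * ξ i := by
  rw [← sum_sub_distrib]
  refine sum_congr rfl fun i _ => ?_
  rcases hξ i with h | h <;> simp [h]

lemma sq_mul_supportIndicator_sub_le (W Z : ι → ℝ) (i : ι) :
    (Z i * supportIndicator W i - Z i) ^ 2 ≤ (W i - Z i) ^ 2 := by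
  by_cases h : W i = 0 <;> simp [supportIndicator, h, sq_nonneg]

lemma sum_sq_mul_supportIndicator_sub_le [Fintype ι] (W Z : ι → ℝ) :
    ∑ i, (Z i * supportIndicator W i - Z i) ^ 2 ≤ ∑ i, (W i - Z i) ^ 2 :=
  sum_le_sum fun i _ => sq_mul_supportIndicator_sub_le W Z i

lemma eq_mul_supportIndicator_of_sum_sq_sub_le [Fintype ι] {W Z : ι → ℝ}
    (h : ∑ i, (W i - Z i) ^ 2 ≤ ∑ i, (Z i * supportIndicator W i - Z i) ^ 2) :
    W = fun i => Z i * supportIndicator W i := by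
  have hterm := (sum_eq_sum_iff_of_le fun i (_ : i ∈ univ) =>
    sq_mul_supportIndicator_sub_le W Z i).mp
      (le_antisymm (sum_sq_mul_supportIndicator_sub_le W Z) h)
  funext i
  have hi := hterm i (mem_univ i)
  by_cases hW : W i = 0
  · simp [supportIndicator, hW]
  · simp only [supportIndicator, ne_eq, hW, not_false_eq_true, if_true, mul_one, sub_self] at hi ⊢
    exact sub_eq_zero.mp (pow_eq_zero_iff two_ne_zero |>.mp (by simpa using hi.symm))

lemma sum_mul_supportIndicator_mul_le [Fintype ι] {A : ι → ℝ} (hA : ∀ i, 0 ≤ A i) (Z : ι → ℝ)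
    {ξ : ι → ℝ} (hξ : IsBinary ξ) :
    ∑ i, A i * supportIndicator (fun j => Z j * ξ j) i ≤ ∑ i, A i * ξ i := by
  refine sum_le_sum fun i _ => mul_le_mul_of_nonneg_left ?_ (hA i)
  rcases hξ i with h | h <;> by_cases hZ : Z i = 0 <;> simp [supportIndicator, h, hZ]

theorem stmt_0_general (n : ℕ) (Z A : Fin n → ℝ) (B : ℝ)
    (hA : ∀ i, 0 ≤ A i) (W : Fin n → ℝ) :
    ((∑ i, A i * (if W i ≠ 0 then (1 : ℝ) else 0)) ≤ B ∧
      ∀ W' : Fin n → ℝ,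
        (∑ i, A i * (if W' i ≠ 0 then (1 : ℝ) else 0)) ≤ B →
        ∑ i, (W i - Z i) ^ 2 ≤ ∑ i, (W' i - Z i) ^ 2) ↔
    (∃ ξ : Fin n → ℝ, (∀ i, ξ i = 0 ∨ ξ i = 1) ∧
      (∑ i, A i * ξ i) ≤ B ∧
      (∀ ξ' : Fin n → ℝ, (∀ i, ξ' i = 0 ∨ ξ' i = 1) →
        (∑ i, A i * ξ' i) ≤ B →
        ∑ i, Z i ^ 2 * ξ' i ≤ ∑ i, Z i ^ 2 * ξ i) ∧
      W = fun i => Z i * ξ i) := by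
  have hξW := isBinary_supportIndicator W
  constructor
  · rintro ⟨hfeas, hopt⟩
    have hW := eq_mul_supportIndicator_of_sum_sq_sub_le <|
      hopt _ ((sum_mul_supportIndicator_mul_le hA Z hξW).trans hfeas)
    refine ⟨supportIndicator W, hξW, hfeas, fun ξ' hξ' hcost => ?_, hW⟩
    have hle := hopt _ ((sum_mul_supportIndicator_mul_le hA Z hξ').trans hcost)
    rw [hW, sum_sq_mul_sub_eq_of_isBinary Z hξW, sum_sq_mul_sub_eq_of_isBinary Z hξ'] at hle
    linarith
  · rintro ⟨ξ, hξ, hcost, hopt, rfl⟩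
    refine ⟨(sum_mul_supportIndicator_mul_le hA Z hξ).trans hcost, fun W' hW' => ?_⟩
    have hξW' := isBinary_supportIndicator W'
    calc ∑ i, (Z i * ξ i - Z i) ^ 2 = ∑ i, Z i ^ 2 - ∑ i, Z i ^ 2 * ξ i :=
          sum_sq_mul_sub_eq_of_isBinary Z hξ
      _ ≤ ∑ i, Z i ^ 2 - ∑ i, Z i ^ 2 * supportIndicator W' i := by
          linarith [hopt _ hξW' hW']
      _ = ∑ i, (Z i * supportIndicator W' i - Z i) ^ 2 :=
          (sum_sq_mul_sub_eq_of_isBinary Z hξW').symm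
      _ ≤ ∑ i, (W' i - Z i) ^ 2 := sum_sq_mul_supportIndicator_sub_le W' Z

/-- Equivalence of the energy-constrained projection problem and the 0/1 knapsack. -/
theorem stmt_0 (n : ℕ) (Z A : Fin n → ℝ) (B : ℝ)
    (hA : ∀ i, 0 ≤ A i) (hB : 0 ≤ B) (W : Fin n → ℝ) :
    ((∑ i, A i * (if W i ≠ 0 then (1 : ℝ) else 0)) ≤ B ∧
      ∀ W' : Fin n → ℝ,
        (∑ i, A i * (if W' i ≠ 0 then (1 : ℝ) else 0)) ≤ B →
        ∑ i, (W i - Z i) ^ 2 ≤ ∑ i, (W' i - Z i) ^ 2) ↔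
    (∃ ξ : Fin n → ℝ, (∀ i, ξ i = 0 ∨ ξ i = 1) ∧
      (∑ i, A i * ξ i) ≤ B ∧
      (∀ ξ' : Fin n → ℝ, (∀ i, ξ' i = 0 ∨ ξ' i = 1) →
        (∑ i, A i * ξ' i) ≤ B →
        ∑ i, Z i ^ 2 * ξ' i ≤ ∑ i, Z i ^ 2 * ξ i) ∧
      W = fun i => Z i * ξ i) :=
  stmt_0_general n Z A B hA W
end

section
/- The greedy knapsack algorithm that sorts items by profit density v_i / A_i in descending order and selects items as long as the budget permits achieves objective value at least OPT − v_t/A_t · R, where t is the index of the first item that was not selected (the (k+1)-th largest density, k being the number of selected items), OPT is the optimal 0/1 knapsack value, and R is the remaining unused budget of the greedy solution. -/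
/-! Exchange argument. With ρ the density of the first rejected item, every greedily selected item
has `v i ≥ ρ A i` and every other item has `v i ≤ ρ A i`, so `(v i - ρ A i)(x i - ξ i) ≤ 0` for any
`x ∈ [0,1]ⁿ`. Summing gives `⟨v, x⟩ - ⟨v, ξ⟩ ≤ ρ (⟨A, x⟩ - ⟨A, ξ⟩) ≤ ρ (B - ⟨A, ξ⟩)` for every
feasible `x`, in particular for an optimal one. -/

open Finset

theorem sum_mul_sub_sum_mul_le_of_exchange {ι 𝕜 : Type*} [Fintype ι] [CommRing 𝕜] [LinearOrder 𝕜]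
    [IsStrictOrderedRing 𝕜] {v A x ξ : ι → 𝕜} {ρ : 𝕜}
    (h : ∀ i, (v i - ρ * A i) * (x i - ξ i) ≤ 0) :
    ∑ i, v i * x i - ∑ i, v i * ξ i ≤ ρ * (∑ i, A i * x i - ∑ i, A i * ξ i) := by
  have hsum : ∑ i, (v i - ρ * A i) * (x i - ξ i) ≤ 0 := sum_nonpos fun i _ => h i
  have hexpand : ∑ i, (v i - ρ * A i) * (x i - ξ i) =
      (∑ i, v i * x i - ∑ i, v i * ξ i) - ρ * (∑ i, A i * x i - ∑ i, A i * ξ i) := by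
    simp only [mul_sub, sub_mul, sum_sub_distrib, mul_sum, mul_assoc]
    ring
  linarith

theorem density_sub_mul_sub_nonpos {v a ρ x ξ : ℝ} (ha : 0 < a) (hx₀ : 0 ≤ x) (hx₁ : x ≤ 1)
    (hξ : (ξ = 1 ∧ ρ ≤ v / a) ∨ (ξ = 0 ∧ v / a ≤ ρ)) :
    (v - ρ * a) * (x - ξ) ≤ 0 := by
  rcases hξ with ⟨rfl, hρ⟩ | ⟨rfl, hρ⟩
  · exact mul_nonpos_of_nonneg_of_nonpos (sub_nonneg.2 ((le_div_iff₀ ha).1 hρ)) (by linarith)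
  · exact mul_nonpos_of_nonpos_of_nonneg (sub_nonpos.2 ((div_le_iff₀ ha).1 hρ)) (by linarith)

theorem stmt_3_general (n : ℕ) (v A : Fin n → ℝ) (B : ℝ)
    (hv : ∀ i, 0 ≤ v i) (hA : ∀ i, 0 < A i)
    (σ : Equiv.Perm (Fin n))
    (hsort : ∀ i j : Fin n, i ≤ j → v (σ j) / A (σ j) ≤ v (σ i) / A (σ i))
    (k : Fin n) (ξ : Fin n → ℝ)
    (hξ : ξ = fun i => if (σ.symm i : ℕ) < (k : ℕ) then (1 : ℝ) else 0)
    (OPT : ℝ)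
    (hOPT : IsGreatest {t : ℝ | ∃ ξ' : Fin n → ℝ, (∀ i, ξ' i = 0 ∨ ξ' i = 1) ∧
      (∑ i, A i * ξ' i) ≤ B ∧ t = ∑ i, v i * ξ' i} OPT) :
    OPT - (v (σ k) / A (σ k)) * (B - ∑ i, A i * ξ i) ≤ ∑ i, v i * ξ i := by
  obtain ⟨⟨x, hx, hxB, rfl⟩, -⟩ := hOPT
  set ρ := v (σ k) / A (σ k)
  have hρ : 0 ≤ ρ := div_nonneg (hv _) (hA _).le
  have hexchange : ∀ i, (v i - ρ * A i) * (x i - ξ i) ≤ 0 := by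
    intro i
    obtain ⟨j, rfl⟩ := σ.surjective i
    have hx₀ : 0 ≤ x (σ j) := by rcases hx (σ j) with h | h <;> simp [h]
    have hx₁ : x (σ j) ≤ 1 := by rcases hx (σ j) with h | h <;> simp [h]
    refine density_sub_mul_sub_nonpos (hA _) hx₀ hx₁ ?_
    simp only [hξ, Equiv.symm_apply_apply]
    rcases lt_or_ge (j : ℕ) k with hj | hj
    · exact Or.inl ⟨if_pos hj, hsort j k (Fin.le_def.2 hj.le)⟩
    · exact Or.inr ⟨if_neg hj.not_gt, hsort k j (Fin.le_def.2 hj)⟩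
  calc ∑ i, v i * x i - ρ * (B - ∑ i, A i * ξ i)
      ≤ ∑ i, v i * x i - ρ * (∑ i, A i * x i - ∑ i, A i * ξ i) := by
        gcongr
    _ ≤ ∑ i, v i * ξ i := by
        linarith [sum_mul_sub_sum_mul_le_of_exchange hexchange]

/-- The greedy knapsack algorithm by profit density achieves at least
OPT − (v_t/A_t)·R where t is the first rejected item and R the remaining budget. -/
theorem stmt_3 (n : ℕ) (v A : Fin n → ℝ) (B : ℝ)
    (hv : ∀ i, 0 ≤ v i) (hA : ∀ i, 0 < A i) (hB : 0 ≤ B)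
    (σ : Equiv.Perm (Fin n))
    (hsort : ∀ i j : Fin n, i ≤ j → v (σ j) / A (σ j) ≤ v (σ i) / A (σ i))
    (k : Fin n) (ξ : Fin n → ℝ)
    (hξ : ξ = fun i => if (σ.symm i : ℕ) < (k : ℕ) then (1 : ℝ) else 0)
    (hfit : (∑ i, A i * ξ i) ≤ B)
    (hstop : B < (∑ i, A i * ξ i) + A (σ k))
    (OPT : ℝ)
    (hOPT : IsGreatest {t : ℝ | ∃ ξ' : Fin n → ℝ, (∀ i, ξ' i = 0 ∨ ξ' i = 1) ∧
      (∑ i, A i * ξ' i) ≤ B ∧ t = ∑ i, v i * ξ' i} OPT) :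
    OPT - (v (σ k) / A (σ k)) * (B - ∑ i, A i * ξ i) ≤ ∑ i, v i * ξ i :=
  stmt_3_general n v A B hv hA σ hsort k ξ hξ OPT hOPT
end

section
/- If the greedy knapsack algorithm ends with zero remaining budget (R = 0), then the greedy solution is optimal for the fractional knapsack relaxation, and hence also optimal for the 0/1 knapsack problem. -/
/-!
Let `t` be the profit density of the last item the greedy pass looks at. Every selected item has
density at least `t` and every rejected one at most `t`, so for any fractional `ξ'`,
`⟨v, ξ' - ξ⟩ ≤ t ⟨A, ξ' - ξ⟩`. When the budget is used up, `⟨A, ξ'⟩ ≤ B = ⟨A, ξ⟩`, and the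
right-hand side is `≤ 0`: `t` is a dual certificate for the LP relaxation.
-/

open Finset

theorem sum_mul_le_sum_mul_of_density_threshold {ι : Type*} [Fintype ι] {v A x y : ι → ℝ}
    {t : ℝ} (ht : 0 ≤ t) (hpt : ∀ i, v i * (x i - y i) ≤ t * (A i * (x i - y i)))
    (hcap : ∑ i, A i * x i ≤ ∑ i, A i * y i) :
    ∑ i, v i * x i ≤ ∑ i, v i * y i := by
  have hsum : ∑ i, v i * (x i - y i) ≤ t * ∑ i, A i * (x i - y i) := by
    rw [mul_sum]
    exact sum_le_sum fun i _ => hpt i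
  simp only [mul_sub, sum_sub_distrib] at hsum
  nlinarith

theorem mul_sub_ite_le_of_density {v a t x : ℝ} {p : Prop} [Decidable p]
    (hx₀ : 0 ≤ x) (hx₁ : x ≤ 1) (hp : p → t * a ≤ v) (hnp : ¬p → v ≤ t * a) :
    v * (x - if p then 1 else 0) ≤ t * (a * (x - if p then 1 else 0)) := by
  split_ifs with h
  · nlinarith [hp h]
  · nlinarith [hnp h]

theorem exists_density_threshold_of_sorted {n : ℕ} {v A : Fin n → ℝ} (hv : ∀ i, 0 ≤ v i)
    (hA : ∀ i, 0 < A i) (σ : Equiv.Perm (Fin n))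
    (hsort : ∀ i j : Fin n, i ≤ j → v (σ j) / A (σ j) ≤ v (σ i) / A (σ i)) (k : ℕ) :
    ∃ t, 0 ≤ t ∧ ∀ i, ((σ.symm i : ℕ) < k → t * A i ≤ v i) ∧
      (¬(σ.symm i : ℕ) < k → v i ≤ t * A i) := by
  rcases Nat.eq_zero_or_pos n with rfl | hn
  · exact ⟨0, le_rfl, fun i => i.elim0⟩
  let j₀ : Fin n := ⟨min (k - 1) (n - 1), by omega⟩
  refine ⟨v (σ j₀) / A (σ j₀), div_nonneg (hv _) (hA _).le, fun i => ⟨fun hi => ?_, fun hi => ?_⟩⟩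
  · have hle := hsort (σ.symm i) j₀ (Fin.le_def.2 (by simp only [j₀]; omega))
    rwa [Equiv.apply_symm_apply, le_div_iff₀ (hA i)] at hle
  · have hle := hsort j₀ (σ.symm i) (Fin.le_def.2 (by simp only [j₀]; omega))
    rwa [Equiv.apply_symm_apply, div_le_iff₀ (hA i)] at hle

theorem stmt_5_general (n : ℕ) (v A : Fin n → ℝ) (B : ℝ)
    (hv : ∀ i, 0 ≤ v i) (hA : ∀ i, 0 < A i)
    (σ : Equiv.Perm (Fin n))
    (hsort : ∀ i j : Fin n, i ≤ j → v (σ j) / A (σ j) ≤ v (σ i) / A (σ i))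
    (k : ℕ) (ξ : Fin n → ℝ)
    (hξ : ξ = fun i => if (σ.symm i : ℕ) < k then (1 : ℝ) else 0)
    (hR : B - (∑ i, A i * ξ i) = 0) :
    (∀ ξ' : Fin n → ℝ, (∀ i, 0 ≤ ξ' i ∧ ξ' i ≤ 1) → (∑ i, A i * ξ' i) ≤ B →
      ∑ i, v i * ξ' i ≤ ∑ i, v i * ξ i) ∧
    (∀ ξ' : Fin n → ℝ, (∀ i, ξ' i = 0 ∨ ξ' i = 1) → (∑ i, A i * ξ' i) ≤ B →
      ∑ i, v i * ξ' i ≤ ∑ i, v i * ξ i) := by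
  obtain ⟨t, ht, hdens⟩ := exists_density_threshold_of_sorted hv hA σ hsort k
  have fractional : ∀ ξ' : Fin n → ℝ, (∀ i, 0 ≤ ξ' i ∧ ξ' i ≤ 1) →
      (∑ i, A i * ξ' i) ≤ B → ∑ i, v i * ξ' i ≤ ∑ i, v i * ξ i := by
    intro ξ' hbox hcap
    refine sum_mul_le_sum_mul_of_density_threshold ht (fun i => ?_) (by linarith)
    subst hξ
    exact mul_sub_ite_le_of_density (hbox i).1 (hbox i).2 (hdens i).1 (hdens i).2
  refine ⟨fractional, fun ξ' hbin => fractional ξ' fun i => ?_⟩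
  rcases hbin i with h | h <;> simp [h]

/-- If the greedy knapsack algorithm ends with zero remaining budget, its solution is
optimal for the fractional relaxation, hence also for the 0/1 knapsack problem. -/
theorem stmt_5 (n : ℕ) (v A : Fin n → ℝ) (B : ℝ)
    (hv : ∀ i, 0 ≤ v i) (hA : ∀ i, 0 < A i) (hB : 0 ≤ B)
    (σ : Equiv.Perm (Fin n))
    (hsort : ∀ i j : Fin n, i ≤ j → v (σ j) / A (σ j) ≤ v (σ i) / A (σ i))
    (k : ℕ) (hk : k ≤ n) (ξ : Fin n → ℝ)
    (hξ : ξ = fun i => if (σ.symm i : ℕ) < k then (1 : ℝ) else 0)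
    (hR : B - (∑ i, A i * ξ i) = 0) :
    (∀ ξ' : Fin n → ℝ, (∀ i, 0 ≤ ξ' i ∧ ξ' i ≤ 1) → (∑ i, A i * ξ' i) ≤ B →
      ∑ i, v i * ξ' i ≤ ∑ i, v i * ξ i) ∧
    (∀ ξ' : Fin n → ℝ, (∀ i, ξ' i = 0 ∨ ξ' i = 1) → (∑ i, A i * ξ' i) ≤ B →
      ∑ i, v i * ξ' i ≤ ∑ i, v i * ξ i) :=
  stmt_5_general n v A B hv hA σ hsort k ξ hξ hR
end

section
/- For nondecreasing w-uniform step functions f and g, the inverse of their (min,+)-convolution equals the (max,+)-convolution of their inverses: (f ⊕ g)^{-1}(y) = max over y' ∈ {0, w, 2w, …} of ( f^{-1}(y') + g^{-1}(y − y') ). -/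
/-!
Every pair `(a, b)` with `f a ≤ y₁` and `g b ≤ y₂` gives `minconv f g (a + b) ≤ y₁ + y₂`, so
`f⁻¹(y₁) + g⁻¹(y₂) ≤ (f ⊕ g)⁻¹(y₁ + y₂)` for every split of `y`. Conversely, uniform step
functions take finitely many values, so the infimum defining `(f ⊕ g)(x)` is attained at some
`x'`; writing `f x' = m w`, the point `x = x' + (x - x')` lies below
`f⁻¹(m w) + g⁻¹(y - m w)`, and only the finitely many `m ≤ l` occur.
-/

/-- (min,+)-convolution. -/
noncomputable def minconv (f g : ℝ → ℝ) : ℝ → ℝ :=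
  fun x => sInf {y : ℝ | ∃ x' : ℝ, y = f x' + g (x - x')}

/-- Inverse of a nondecreasing step function: f⁻¹(y) = sup{x : f x ≤ y}. -/
noncomputable def stepInv (f : ℝ → ℝ) (y : ℝ) : ℝ :=
  sSup {x : ℝ | f x ≤ y}

open Set Pointwise

section MinConv

variable {f g : ℝ → ℝ}

theorem minconv_le_add (hf : BddBelow (range f)) (hg : BddBelow (range g)) (x x' : ℝ) :
    minconv f g x ≤ f x' + g (x - x') := by
  obtain ⟨a, ha⟩ := hf
  obtain ⟨b, hb⟩ := hg
  refine csInf_le ⟨a + b, ?_⟩ ⟨x', rfl⟩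
  rintro _ ⟨z, rfl⟩
  exact add_le_add (ha ⟨z, rfl⟩) (hb ⟨x - z, rfl⟩)

theorem exists_minconv_eq_add (hf : (range f).Finite) (hg : (range g).Finite) (x : ℝ) :
    ∃ x', minconv f g x = f x' + g (x - x') := by
  have hfin : {v : ℝ | ∃ x' : ℝ, v = f x' + g (x - x')}.Finite := by
    refine (hf.add hg).subset ?_
    rintro _ ⟨x', rfl⟩
    exact add_mem_add ⟨x', rfl⟩ ⟨x - x', rfl⟩
  exact (Set.Nonempty.csInf_mem ⟨_, 0, rfl⟩ hfin : minconv f g x ∈ _)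

theorem add_le_stepInv_add_stepInv {a b y₁ y₂ : ℝ} (ha : f a ≤ y₁) (hb : g b ≤ y₂)
    (hf₁ : BddAbove {x | f x ≤ y₁}) (hg₂ : BddAbove {x | g x ≤ y₂}) :
    a + b ≤ stepInv f y₁ + stepInv g y₂ :=
  add_le_add (le_csSup hf₁ ha) (le_csSup hg₂ hb)

theorem stepInv_add_stepInv_le_stepInv_minconv (hf : BddBelow (range f))
    (hg : BddBelow (range g)) {y₁ y₂ : ℝ}
    (hf₁ : {x | f x ≤ y₁}.Nonempty ∧ BddAbove {x | f x ≤ y₁})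
    (hg₂ : {x | g x ≤ y₂}.Nonempty ∧ BddAbove {x | g x ≤ y₂})
    (hfg : BddAbove {x | minconv f g x ≤ y₁ + y₂}) :
    stepInv f y₁ + stepInv g y₂ ≤ stepInv (minconv f g) (y₁ + y₂) := by
  rw [stepInv, stepInv, ← csSup_add hf₁.1 hf₁.2 hg₂.1 hg₂.2]
  refine csSup_le_csSup hfg (hf₁.1.add hg₂.1) ?_
  rintro _ ⟨a, ha, b, hb, rfl⟩
  calc minconv f g (a + b) ≤ f a + g (a + b - a) := minconv_le_add hf hg _ _
    _ = f a + g b := by rw [add_sub_cancel_left]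
    _ ≤ y₁ + y₂ := add_le_add ha hb

end MinConv

theorem isGreatest_csSup_of_forall_le_of_exists_ge {ι : Type*} {φ : ι → ℝ} {P : ι → Prop}
    {S : Set ℝ} {T : Set ι} (hS : S.Nonempty) (hT : T.Finite) (hle : ∀ i, P i → φ i ≤ sSup S)
    (hge : ∀ x ∈ S, ∃ i ∈ T, P i ∧ x ≤ φ i) :
    IsGreatest {s | ∃ i, P i ∧ s = φ i} (sSup S) := by
  obtain ⟨x₀, hx₀⟩ := hS
  obtain ⟨i₀, hi₀T, hi₀, -⟩ := hge x₀ hx₀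
  obtain ⟨i, ⟨-, hi⟩, hmax⟩ := exists_max_image {i ∈ T | P i} φ (hT.subset (sep_subset _ _))
    ⟨i₀, hi₀T, hi₀⟩
  refine ⟨⟨i, hi, le_antisymm (csSup_le ⟨x₀, hx₀⟩ fun x hx => ?_) (hle i hi)⟩, ?_⟩
  · obtain ⟨j, hjT, hj, hxj⟩ := hge x hx
    exact hxj.trans (hmax j ⟨hjT, hj⟩)
  · rintro _ ⟨j, hj, rfl⟩
    exact hle j hj

section Uniform

variable {f : ℝ → ℝ} {w : ℝ} {l : ℕ}

theorem range_finite_of_uniform (hfu : ∀ x, ∃ m : ℕ, m ≤ l ∧ f x = (m : ℝ) * w) :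
    (range f).Finite := by
  refine ((Finset.range (l + 1)).finite_toSet.image fun m : ℕ => (m : ℝ) * w).subset ?_
  rintro _ ⟨x, rfl⟩
  obtain ⟨m, hml, hm⟩ := hfu x
  exact ⟨m, Finset.mem_range.mpr (Nat.lt_succ_of_le hml), hm.symm⟩

theorem nonneg_of_uniform (hw : 0 ≤ w) (hfu : ∀ x, ∃ m : ℕ, m ≤ l ∧ f x = (m : ℝ) * w)
    (x : ℝ) : 0 ≤ f x := by
  obtain ⟨m, -, hm⟩ := hfu x
  rw [hm]
  positivity

end Uniform

theorem stmt_11_general (f g : ℝ → ℝ) (w : ℝ) (hw : 0 < w) (l : ℕ)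
    (hfu : ∀ x, ∃ m : ℕ, m ≤ l ∧ f x = (m : ℝ) * w)
    (hgu : ∀ x, ∃ m : ℕ, m ≤ l ∧ g x = (m : ℝ) * w)
    (y : ℝ)
    (hne : ∀ y' : ℝ, 0 ≤ y' → y' ≤ y →
      (({x : ℝ | f x ≤ y'}.Nonempty ∧ BddAbove {x : ℝ | f x ≤ y'}) ∧
       ({x : ℝ | g x ≤ y'}.Nonempty ∧ BddAbove {x : ℝ | g x ≤ y'})))
    (hconv : {x : ℝ | minconv f g x ≤ y}.Nonempty ∧
      BddAbove {x : ℝ | minconv f g x ≤ y}) :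
    IsGreatest {s : ℝ | ∃ m : ℕ, (m : ℝ) * w ≤ y ∧
        s = stepInv f ((m : ℝ) * w) + stepInv g (y - (m : ℝ) * w)}
      (stepInv (minconv f g) y) := by
  have hf0 := nonneg_of_uniform hw.le hfu
  have hg0 := nonneg_of_uniform hw.le hgu
  have hfb : BddBelow (range f) := ⟨0, by rintro _ ⟨x, rfl⟩; exact hf0 x⟩
  have hgb : BddBelow (range g) := ⟨0, by rintro _ ⟨x, rfl⟩; exact hg0 x⟩
  have hmw : ∀ m : ℕ, 0 ≤ (m : ℝ) * w := fun m => by positivity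
  refine isGreatest_csSup_of_forall_le_of_exists_ge
    (φ := fun m : ℕ => stepInv f ((m : ℝ) * w) + stepInv g (y - (m : ℝ) * w))
    hconv.1 (finite_le_nat l) (fun m hmy => ?_) (fun x hx => ?_)
  · have := stepInv_add_stepInv_le_stepInv_minconv hfb hgb (hne _ (hmw m) hmy).1
      (hne (y - m * w) (by linarith) (by linarith [hmw m])).2 (by simpa using hconv.2)
    rwa [add_sub_cancel] at this
  · obtain ⟨x', hx'⟩ := exists_minconv_eq_add (range_finite_of_uniform hfu)
      (range_finite_of_uniform hgu) x
    have hsum : f x' + g (x - x') ≤ y := hx' ▸ hx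
    obtain ⟨m, hml, hm⟩ := hfu x'
    have hmy : (m : ℝ) * w ≤ y := by linarith [hg0 (x - x')]
    refine ⟨m, hml, hmy, ?_⟩
    calc x = x' + (x - x') := by ring
      _ ≤ _ := add_le_stepInv_add_stepInv hm.le (by linarith)
        (hne _ (hmw m) hmy).1.2 (hne _ (by linarith) (by linarith [hmw m])).2.2

/-- For nondecreasing w-uniform step functions, the inverse of the
(min,+)-convolution is the (max,+)-convolution of the inverses over the grid
of multiples of w. -/
theorem stmt_11 (f g : ℝ → ℝ) (w : ℝ) (hw : 0 < w) (l : ℕ)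
    (hf : Monotone f) (hg : Monotone g)
    (hfu : ∀ x, ∃ m : ℕ, m ≤ l ∧ f x = (m : ℝ) * w)
    (hgu : ∀ x, ∃ m : ℕ, m ≤ l ∧ g x = (m : ℝ) * w)
    (y : ℝ)
    (hne : ∀ y' : ℝ, 0 ≤ y' → y' ≤ y →
      (({x : ℝ | f x ≤ y'}.Nonempty ∧ BddAbove {x : ℝ | f x ≤ y'}) ∧
       ({x : ℝ | g x ≤ y'}.Nonempty ∧ BddAbove {x : ℝ | g x ≤ y'})))
    (hconv : {x : ℝ | minconv f g x ≤ y}.Nonempty ∧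
      BddAbove {x : ℝ | minconv f g x ≤ y}) :
    IsGreatest {s : ℝ | ∃ m : ℕ, (m : ℝ) * w ≤ y ∧
        s = stepInv f ((m : ℝ) * w) + stepInv g (y - (m : ℝ) * w)}
      (stepInv (minconv f g) y) :=
  stmt_11_general f g w hw l hfu hgu y hne hconv
end

section
/- The greedy knapsack solution ξ by profit density satisfies ⟨v, ξ⟩ ≥ OPT − (v_t/A_t)·(max(A) − gcd(A)), where t indexes the (k+1)-th largest profit density (k = number of items selected by greedy), OPT is the 0/1 knapsack optimum, all weights A_i are positive rationals, max(A) is the largest weight, and gcd(A) is the greatest common divisor of the weights. -/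
/-!
Items taken by greedy have density at least `ρ = v_t / A_t`, the others at most `ρ`, so any
feasible solution beats greedy by at most `ρ` times its excess weight. Both weights are multiples
of `g`, and the optimum's weight is below greedy's plus `A_t`, so the excess is at most `A_t - g`.
-/

open Finset

section

variable {ι K : Type*} [Fintype ι] [Field K] [LinearOrder K] [IsStrictOrderedRing K]

theorem exists_sum_mul_eq_natCast_mul_of_binary (A ξ : ι → K) (g : K)
    (hA : ∀ i, ∃ m : ℕ, A i = m * g) (hξ : ∀ i, ξ i = 0 ∨ ξ i = 1) :
    ∃ M : ℕ, ∑ i, A i * ξ i = M * g := by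
  classical
  choose m hm using hA
  refine ⟨∑ i, if ξ i = 1 then m i else 0, ?_⟩
  rw [Nat.cast_sum, sum_mul]
  refine sum_congr rfl fun i _ => ?_
  rcases hξ i with h | h <;> simp [h, hm i]

theorem sum_sub_sum_ite_le_mul_sub (v A ξ : ι → K) (ρ : K) (p : ι → Prop) [DecidablePred p]
    (hin : ∀ i, p i → ρ * A i ≤ v i) (hout : ∀ i, ¬ p i → v i ≤ ρ * A i)
    (hξ : ∀ i, 0 ≤ ξ i ∧ ξ i ≤ 1) :
    ∑ i, v i * ξ i - ∑ i, v i * (if p i then 1 else 0)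
      ≤ ρ * (∑ i, A i * ξ i - ∑ i, A i * (if p i then 1 else 0)) := by
  rw [← sum_sub_distrib, ← sum_sub_distrib, mul_sum]
  refine sum_le_sum fun i _ => ?_
  by_cases h : p i
  · simp only [h, if_true, mul_one]
    nlinarith [hin i h, hξ i]
  · simp only [h, if_false, mul_zero, sub_zero]
    nlinarith [hout i h, hξ i]

theorem sub_le_sub_of_lt_add_of_natCast_mul {a b c g : K} (hg : 0 < g)
    (ha : ∃ m : ℕ, a = m * g) (hb : ∃ m : ℕ, b = m * g) (hc : ∃ m : ℕ, c = m * g)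
    (h : b < a + c) : b - a ≤ c - g := by
  obtain ⟨m₁, rfl⟩ := ha
  obtain ⟨m₂, rfl⟩ := hb
  obtain ⟨m₃, rfl⟩ := hc
  have hlt : (m₂ : K) < m₁ + m₃ := lt_of_mul_lt_mul_right (by linarith) hg.le
  have hle : (m₂ : K) + 1 ≤ m₁ + m₃ := by exact_mod_cast (show m₂ < m₁ + m₃ by exact_mod_cast hlt)
  nlinarith

end

theorem stmt_14_general (n : ℕ) (v A : Fin n → ℝ) (B : ℝ)
    (hv : ∀ i, 0 ≤ v i) (hA : ∀ i, 0 < A i)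
    (g : ℝ) (hg : 0 < g)
    (hdvd : ∀ i, ∃ m : ℕ, A i = (m : ℝ) * g)
    (maxA : ℝ) (hmaxA : ∀ i, A i ≤ maxA)
    (σ : Equiv.Perm (Fin n))
    (hsort : ∀ i j : Fin n, i ≤ j → v (σ j) / A (σ j) ≤ v (σ i) / A (σ i))
    (k : Fin n) (ξ : Fin n → ℝ)
    (hξ : ξ = fun i => if (σ.symm i : ℕ) < (k : ℕ) then (1 : ℝ) else 0)
    (hstop : B < (∑ i, A i * ξ i) + A (σ k))
    (OPT : ℝ)
    (hOPT : IsGreatest {t : ℝ | ∃ ξ' : Fin n → ℝ, (∀ i, ξ' i = 0 ∨ ξ' i = 1) ∧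
      (∑ i, A i * ξ' i) ≤ B ∧ t = ∑ i, v i * ξ' i} OPT) :
    OPT - (v (σ k) / A (σ k)) * (maxA - g) ≤ ∑ i, v i * ξ i := by
  obtain ⟨ξ', hξ'01, hξ'B, rfl⟩ := hOPT.1
  subst hξ
  set ρ := v (σ k) / A (σ k)
  have hin : ∀ i, (σ.symm i : ℕ) < k → ρ * A i ≤ v i := fun i hi =>
    (le_div_iff₀ (hA i)).1 (by simpa using hsort _ k (Fin.le_of_lt hi))
  have hout : ∀ i, ¬ (σ.symm i : ℕ) < k → v i ≤ ρ * A i := fun i hi =>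
    (div_le_iff₀ (hA i)).1 (by simpa using hsort k _ (not_lt.1 hi))
  have hexchange := sum_sub_sum_ite_le_mul_sub v A ξ' ρ _ hin hout fun i => by
    rcases hξ'01 i with h | h <;> simp [h]
  have hgap := sub_le_sub_of_lt_add_of_natCast_mul hg
    (exists_sum_mul_eq_natCast_mul_of_binary A _ g hdvd fun i => by split_ifs <;> simp)
    (exists_sum_mul_eq_natCast_mul_of_binary A ξ' g hdvd hξ'01) (hdvd (σ k))
    (hξ'B.trans_lt hstop)
  have hρ : 0 ≤ ρ := div_nonneg (hv _) (hA _).le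
  linarith [mul_le_mul_of_nonneg_left (hgap.trans (sub_le_sub_right (hmaxA (σ k)) g)) hρ]

/-- Greedy knapsack bound via the gcd of the weights:
⟨v, ξ⟩ ≥ OPT − (v_t/A_t)·(max(A) − gcd(A)). -/
theorem stmt_14 (n : ℕ) (v A : Fin n → ℝ) (B : ℝ)
    (hv : ∀ i, 0 ≤ v i) (hA : ∀ i, 0 < A i) (hB : 0 ≤ B)
    (g : ℝ) (hg : 0 < g)
    (hdvd : ∀ i, ∃ m : ℕ, A i = (m : ℝ) * g)
    (hgcd : ∀ g' : ℝ, 0 < g' → (∀ i, ∃ m : ℕ, A i = (m : ℝ) * g') → g' ≤ g)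
    (maxA : ℝ) (hmaxA : ∀ i, A i ≤ maxA) (hmaxA' : ∃ i, A i = maxA)
    (σ : Equiv.Perm (Fin n))
    (hsort : ∀ i j : Fin n, i ≤ j → v (σ j) / A (σ j) ≤ v (σ i) / A (σ i))
    (k : Fin n) (ξ : Fin n → ℝ)
    (hξ : ξ = fun i => if (σ.symm i : ℕ) < (k : ℕ) then (1 : ℝ) else 0)
    (hfit : (∑ i, A i * ξ i) ≤ B)
    (hstop : B < (∑ i, A i * ξ i) + A (σ k))
    (OPT : ℝ)
    (hOPT : IsGreatest {t : ℝ | ∃ ξ' : Fin n → ℝ, (∀ i, ξ' i = 0 ∨ ξ' i = 1) ∧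
      (∑ i, A i * ξ' i) ≤ B ∧ t = ∑ i, v i * ξ' i} OPT) :
    OPT - (v (σ k) / A (σ k)) * (maxA - g) ≤ ∑ i, v i * ξ i :=
  stmt_14_general n v A B hv hA g hg hdvd maxA hmaxA σ hsort k ξ hξ hstop OPT hOPT
end

section
/- In the relaxed knapsack problem over Γ (each ξ_i a multiple of g/A_i in [0,1], ⟨A, ξ⟩ ≤ B), the optimal value exceeds the greedy 0/1 solution value by at most v_t·(1 − g/A_t), where t is the first item rejected by greedy; i.e., max_{ξ∈Γ} ⟨v, ξ⟩ ≤ ⟨v, ξ_greedy⟩ + (v_t/A_t)·(A_t − g). -/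
/-!
Let `r = v_t / A_t`. Greedy takes exactly items of density `≥ r` and leaves those of density
`≤ r`, so for any `ξ' ∈ [0,1]ⁿ` each term of `∑ (v_i - r A_i)(ξ'_i - ξ_i)` is `≤ 0`: the value
gained over greedy is at most `r` times the weight gained. Every weight `A_i ξ'_i` lies on the
grid `gℕ`, and so do the greedy weight `W` and `A_t`; since `⟨A, ξ'⟩ ≤ B < W + A_t`, integrality
improves this to `⟨A, ξ'⟩ ≤ W + A_t - g`, so the weight gained is at most `A_t - g`.
-/

open Finset

theorem add_le_of_lt_of_mem_multiples {M : Type*} [AddCommMonoid M] [LinearOrder M]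
    [IsOrderedCancelAddMonoid M] {g x y : M} (hg : 0 < g)
    (hx : x ∈ AddSubmonoid.multiples g) (hy : y ∈ AddSubmonoid.multiples g) (hxy : x < y) :
    x + g ≤ y := by
  obtain ⟨a, rfl⟩ := hx
  obtain ⟨b, rfl⟩ := hy
  have hab : a + 1 ≤ b := (nsmul_lt_nsmul_iff_left hg).1 hxy
  simpa [succ_nsmul] using nsmul_le_nsmul_left hg.le hab

theorem natCast_mul_mem_multiples {R : Type*} [NonAssocSemiring R] (m : ℕ) (g : R) :
    (m : R) * g ∈ AddSubmonoid.multiples g :=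
  (AddSubmonoid.mem_multiples_iff _ _).2 ⟨m, nsmul_eq_mul m g⟩

theorem mul_mem_multiples_of_eq_natCast_mul_div {K : Type*} [Field K] {a g x : K} {m : ℕ}
    (ha : a ≠ 0) (hx : x = m * (g / a)) : a * x ∈ AddSubmonoid.multiples g := by
  rw [hx, mul_left_comm, mul_div_cancel₀ _ ha]
  exact natCast_mul_mem_multiples m g

section ThresholdSelection

variable {ι R : Type*} [CommRing R] [LinearOrder R]

def IsThresholdSelection (r : R) (v A ξ : ι → R) : Prop :=
  ∀ i, (ξ i = 1 ∧ r * A i ≤ v i) ∨ (ξ i = 0 ∧ v i ≤ r * A i)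

theorem IsThresholdSelection.sum_mul_sub_sum_mul_le [Fintype ι] [IsStrictOrderedRing R]
    {r : R} {v A ξ : ι → R} (hξ : IsThresholdSelection r v A ξ) {ξ' : ι → R}
    (hξ' : ∀ i, 0 ≤ ξ' i ∧ ξ' i ≤ 1) :
    ∑ i, v i * ξ' i - ∑ i, v i * ξ i ≤ r * (∑ i, A i * ξ' i - ∑ i, A i * ξ i) := by
  have hterm : ∀ i, (v i - r * A i) * (ξ' i - ξ i) ≤ 0 := fun i => by
    rcases hξ i with ⟨hsel, hdense⟩ | ⟨hsel, hsparse⟩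
    · exact mul_nonpos_of_nonneg_of_nonpos (by linarith) (by linarith [(hξ' i).2])
    · exact mul_nonpos_of_nonpos_of_nonneg (by linarith) (by linarith [(hξ' i).1])
  have hsum := sum_nonpos fun i (_ : i ∈ univ) => hterm i
  simp only [sub_mul, mul_sub, sum_sub_distrib, ← mul_sum, mul_assoc] at hsum
  linarith

theorem IsThresholdSelection.mul_mem_multiples {r : R} {v A ξ : ι → R}
    (hξ : IsThresholdSelection r v A ξ) {g : R} (hA : ∀ i, A i ∈ AddSubmonoid.multiples g)
    (i : ι) : A i * ξ i ∈ AddSubmonoid.multiples g := by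
  rcases hξ i with ⟨hsel, -⟩ | ⟨hsel, -⟩
  · simpa [hsel] using hA i
  · simp [hsel, zero_mem]

end ThresholdSelection

theorem isThresholdSelection_greedy {n : ℕ} {K : Type*} [Field K] [LinearOrder K]
    [IsStrictOrderedRing K] {v A : Fin n → K} (hA : ∀ i, 0 < A i) {σ : Equiv.Perm (Fin n)}
    (hsort : Antitone fun j => v (σ j) / A (σ j)) (k : Fin n) :
    IsThresholdSelection (v (σ k) / A (σ k)) v A
      (fun i => if (σ.symm i : ℕ) < (k : ℕ) then 1 else 0) := by
  intro i
  obtain ⟨j, rfl⟩ := σ.surjective i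
  by_cases hj : (j : ℕ) < (k : ℕ)
  · left
    simpa [hj, ← le_div_iff₀ (hA _)] using hsort hj.le
  · right
    simpa [hj, ← div_le_iff₀ (hA _)] using hsort (Fin.le_def.2 (not_lt.1 hj))

theorem stmt_17_general (n : ℕ) (v A : Fin n → ℝ) (B : ℝ)
    (hv : ∀ i, 0 ≤ v i) (hA : ∀ i, 0 < A i)
    (g : ℝ) (hg : 0 < g) (hdvd : ∀ i, ∃ m : ℕ, A i = (m : ℝ) * g)
    (σ : Equiv.Perm (Fin n))
    (hsort : ∀ i j : Fin n, i ≤ j → v (σ j) / A (σ j) ≤ v (σ i) / A (σ i))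
    (k : Fin n) (ξ : Fin n → ℝ)
    (hξ : ξ = fun i => if (σ.symm i : ℕ) < (k : ℕ) then (1 : ℝ) else 0)
    (hstop : B < (∑ i, A i * ξ i) + A (σ k)) :
    ∀ ξ' : Fin n → ℝ, (∀ i, ∃ m : ℕ, ξ' i = (m : ℝ) * (g / A i)) →
      (∀ i, 0 ≤ ξ' i ∧ ξ' i ≤ 1) → (∑ i, A i * ξ' i) ≤ B →
      ∑ i, v i * ξ' i ≤ (∑ i, v i * ξ i) + (v (σ k) / A (σ k)) * (A (σ k) - g) := by
  intro ξ' hξ'grid hξ'unit hξ'fit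
  have hAgrid : ∀ i, A i ∈ AddSubmonoid.multiples g := fun i =>
    let ⟨m, hm⟩ := hdvd i; hm ▸ natCast_mul_mem_multiples m g
  have hgreedy : IsThresholdSelection (v (σ k) / A (σ k)) v A ξ :=
    hξ ▸ isThresholdSelection_greedy hA (fun i j hij => hsort i j hij) k
  have hexchange := hgreedy.sum_mul_sub_sum_mul_le hξ'unit
  have hgap : ∑ i, A i * ξ' i + g ≤ ∑ i, A i * ξ i + A (σ k) :=
    add_le_of_lt_of_mem_multiples hg
      (AddSubmonoid.sum_mem _ fun i _ =>
        let ⟨_, hm⟩ := hξ'grid i; mul_mem_multiples_of_eq_natCast_mul_div (hA i).ne' hm)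
      (add_mem (AddSubmonoid.sum_mem _ fun i _ => hgreedy.mul_mem_multiples hAgrid i)
        (hAgrid _))
      (hξ'fit.trans_lt hstop)
  have hdensity : 0 ≤ v (σ k) / A (σ k) := div_nonneg (hv _) (hA _).le
  calc ∑ i, v i * ξ' i
      ≤ ∑ i, v i * ξ i + v (σ k) / A (σ k) * (∑ i, A i * ξ' i - ∑ i, A i * ξ i) := by linarith
    _ ≤ ∑ i, v i * ξ i + v (σ k) / A (σ k) * (A (σ k) - g) := by
      gcongr _ + _ * ?_
      linarith

/-- The relaxed knapsack optimum over Γ exceeds the greedy 0/1 value by at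
most (v_t/A_t)·(A_t − g). -/
theorem stmt_17 (n : ℕ) (v A : Fin n → ℝ) (B : ℝ)
    (hv : ∀ i, 0 ≤ v i) (hA : ∀ i, 0 < A i) (hB : 0 ≤ B)
    (g : ℝ) (hg : 0 < g) (hdvd : ∀ i, ∃ m : ℕ, A i = (m : ℝ) * g)
    (σ : Equiv.Perm (Fin n))
    (hsort : ∀ i j : Fin n, i ≤ j → v (σ j) / A (σ j) ≤ v (σ i) / A (σ i))
    (k : Fin n) (ξ : Fin n → ℝ)
    (hξ : ξ = fun i => if (σ.symm i : ℕ) < (k : ℕ) then (1 : ℝ) else 0)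
    (hfit : (∑ i, A i * ξ i) ≤ B)
    (hstop : B < (∑ i, A i * ξ i) + A (σ k)) :
    ∀ ξ' : Fin n → ℝ, (∀ i, ∃ m : ℕ, ξ' i = (m : ℝ) * (g / A i)) →
      (∀ i, 0 ≤ ξ' i ∧ ξ' i ≤ 1) → (∑ i, A i * ξ' i) ≤ B →
      ∑ i, v i * ξ' i ≤ (∑ i, v i * ξ i) + (v (σ k) / A (σ k)) * (A (σ k) - g) :=
  stmt_17_general n v A B hv hA g hg hdvd σ hsort k ξ hξ hstop
end
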